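/- arXiv:2512.19279 — 3 statements merged into one kernel-verified Lean document; each statement's English description precedes it below -/
import Mathlib

section
/- Let L be an n×n Laplacian of rank n−1 and K an n×(n−1) matrix with orthonormal columns orthogonal to 1_n. Then K^T L⁺ K is positive definite and (K^T L⁺ K)⁻¹ = K^T L K, where L⁺ is the Moore–Penrose pseudoinverse of L. -/
open Matrix

/-- `P` is the Moore–Penrose pseudoinverse of `L`, characterized by the four
Penrose conditions. -/
def IsMoorePenrose {n : ℕ} (L P : Matrix (Fin n) (Fin n) ℝ) : Prop :=
  L * P * L = L ∧ P * L * P = P ∧ (L * P)ᵀ = L * P ∧ (P * L)ᵀ = P * L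

lemma mp_unique {m : ℕ} {L P Q : Matrix (Fin m) (Fin m) ℝ}
    (hP : IsMoorePenrose L P) (hQ : IsMoorePenrose L Q) : P = Q := by
  obtain ⟨hP1, hP2, hP3, hP4⟩ := hP
  obtain ⟨hQ1, hQ2, hQ3, hQ4⟩ := hQ
  have hLPQ : L * P = L * Q := by
    calc L * P = (L * P)ᵀ := hP3.symm
    _ = Pᵀ * Lᵀ := by rw [transpose_mul]
    _ = Pᵀ * (L * Q * L)ᵀ := by rw [hQ1]
    _ = Pᵀ * (Lᵀ * (L * Q)ᵀ) := by rw [transpose_mul]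
    _ = (Pᵀ * Lᵀ) * (L * Q)ᵀ := by rw [Matrix.mul_assoc]
    _ = (L * P)ᵀ * (L * Q)ᵀ := by simp only [transpose_mul]
    _ = (L * P) * (L * Q) := by rw [hP3, hQ3]
    _ = (L * P * L) * Q := by rw [← Matrix.mul_assoc]
    _ = L * Q := by rw [hP1]
  have hPQL : P * L = Q * L := by
    calc P * L = (P * L)ᵀ := hP4.symm
    _ = Lᵀ * Pᵀ := by rw [transpose_mul]
    _ = (L * Q * L)ᵀ * Pᵀ := by rw [hQ1]
    _ = ((Q * L)ᵀ * Lᵀ) * Pᵀ := by simp only [transpose_mul, Matrix.mul_assoc]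
    _ = (Q * L)ᵀ * (Lᵀ * Pᵀ) := by rw [Matrix.mul_assoc]
    _ = (Q * L)ᵀ * (P * L)ᵀ := by rw [← transpose_mul]
    _ = (Q * L) * (P * L) := by rw [hP4, hQ4]
    _ = Q * (L * P * L) := by rw [Matrix.mul_assoc, Matrix.mul_assoc]
    _ = Q * L := by rw [hP1]
  calc P = P * L * P := hP2.symm
  _ = Q * L * P := by rw [hPQL]
  _ = Q * (L * P) := by rw [Matrix.mul_assoc]
  _ = Q * (L * Q) := by rw [hLPQ]
  _ = Q * L * Q := by rw [Matrix.mul_assoc]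
  _ = Q := hQ2

lemma mp_symm {m : ℕ} {L P : Matrix (Fin m) (Fin m) ℝ} (hLt : Lᵀ = L)
    (hP : IsMoorePenrose L P) : Pᵀ = P := by
  obtain ⟨hP1, hP2, hP3, hP4⟩ := hP
  refine mp_unique ?_ ⟨hP1, hP2, hP3, hP4⟩
  have h1 : L * Pᵀ = P * L := by
    calc L * Pᵀ = Lᵀ * Pᵀ := by rw [hLt]
    _ = (P * L)ᵀ := by rw [transpose_mul]
    _ = P * L := hP4
  have h2 : Pᵀ * L = L * P := by
    calc Pᵀ * L = Pᵀ * Lᵀ := by rw [hLt]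
    _ = (L * P)ᵀ := by rw [transpose_mul]
    _ = L * P := hP3
  refine ⟨?_, ?_, ?_, ?_⟩
  · have h3 : (L * P * L)ᵀ = L * Pᵀ * L := by
      simp only [transpose_mul, Matrix.mul_assoc, hLt]
    rw [← h3, hP1, hLt]
  · have h3 : (P * L * P)ᵀ = Pᵀ * L * Pᵀ := by
      simp only [transpose_mul, Matrix.mul_assoc, hLt]
    rw [← h3, hP2]
  · rw [h1, hP4]
  · rw [h2, hP3]

lemma sq_trace_zero {m : ℕ} {M : Matrix (Fin m) (Fin m) ℝ} (h : Mᵀ * M = M)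
    (htr : M.trace = 0) : M = 0 := by
  have hsum : ∑ i, ∑ j, M j i * M j i = 0 := by
    have h2 : M.trace = ∑ i, ∑ j, M j i * M j i := by
      conv_lhs => rw [← h]
      simp [Matrix.trace, Matrix.diag, Matrix.mul_apply, Matrix.transpose_apply]
    rw [← h2, htr]
  ext i j
  have h1 : ∀ k ∈ Finset.univ, (0:ℝ) ≤ ∑ l, M l k * M l k :=
    fun k _ => Finset.sum_nonneg fun l _ => mul_self_nonneg _
  have h2 := (Finset.sum_eq_zero_iff_of_nonneg h1).mp hsum
  have h3 := (Finset.sum_eq_zero_iff_of_nonneg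
    (fun l _ => mul_self_nonneg (M l j))).mp (h2 j (Finset.mem_univ j)) i (Finset.mem_univ i)
  simpa using mul_self_eq_zero.mp h3

lemma ker_one_dim {n : ℕ} (hn : 0 < n) (L : Matrix (Fin n) (Fin n) ℝ)
    (hrank : L.rank = n - 1) (hL1 : L.mulVec (fun _ => 1) = 0) :
    ∀ x : Fin n → ℝ, L.mulVec x = 0 → ∃ c : ℝ, x = c • (fun _ => 1 : Fin n → ℝ) := by
  have hu : (fun _ => 1 : Fin n → ℝ) ≠ 0 := fun h => one_ne_zero (congrFun h ⟨0, hn⟩)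
  have hspan : Submodule.span ℝ {(fun _ => 1 : Fin n → ℝ)} = LinearMap.ker L.mulVecLin := by
    apply Submodule.eq_of_le_of_finrank_eq
    · rw [Submodule.span_le, Set.singleton_subset_iff]
      exact LinearMap.mem_ker.mpr (by simpa [Matrix.mulVecLin_apply] using hL1)
    · have h1 : Module.finrank ℝ (Submodule.span ℝ {(fun _ => 1 : Fin n → ℝ)}) = 1 :=
        finrank_span_singleton hu
      have h2 := LinearMap.finrank_range_add_finrank_ker L.mulVecLin
      rw [Module.finrank_fin_fun] at h2
      have h3 : L.rank = Module.finrank ℝ (LinearMap.range L.mulVecLin) := rfl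
      rw [h1]
      omega
  intro x hx
  have hmem : x ∈ Submodule.span ℝ {(fun _ => 1 : Fin n → ℝ)} :=
    hspan ▸ LinearMap.mem_ker.mpr (by simpa [Matrix.mulVecLin_apply] using hx)
  obtain ⟨c, hc⟩ := Submodule.mem_span_singleton.mp hmem
  exact ⟨c, hc.symm⟩

theorem stmt1 {n : ℕ} (L P : Matrix (Fin n) (Fin n) ℝ)
    (K : Matrix (Fin n) (Fin (n - 1)) ℝ)
    (hL : L.PosSemidef) (hL1 : L.mulVec (fun _ => 1) = 0)
    (hrank : L.rank = n - 1)
    (hP : IsMoorePenrose L P)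
    (hK : Kᵀ * K = 1) (hK1 : Kᵀ.mulVec (fun _ => 1) = 0) :
    (Kᵀ * P * K).PosDef ∧ (Kᵀ * P * K)⁻¹ = Kᵀ * L * K := by
  rcases Nat.eq_zero_or_pos n with hn | hn
  · subst hn
    haveI : Subsingleton (Matrix (Fin (0 - 1)) (Fin (0 - 1)) ℝ) :=
      ⟨fun a b => by ext i j; exact i.elim0⟩
    haveI : Subsingleton (Fin (0 - 1) → ℝ) := ⟨fun a b => funext fun i => i.elim0⟩
    exact ⟨Matrix.PosDef.of_dotProduct_mulVec_pos (Subsingleton.elim _ _) fun x hx => absurd (Subsingleton.elim x 0) hx,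
      Subsingleton.elim _ _⟩
  -- basic symmetry facts
  have hLt : Lᵀ = L := by
    have := hL.isHermitian
    rwa [← conjTranspose_eq_transpose_of_trivial]
  have hPt : Pᵀ = P := mp_symm hLt hP
  obtain ⟨hP1, hP2, hP3, hP4⟩ := hP
  have hComm : L * P = P * L := by
    conv_lhs => rw [← hLt, ← hPt, ← transpose_mul, hP4]
  -- the all-ones vector
  set u : Fin n → ℝ := fun _ => 1 with hu_def
  -- row and column sums of L vanish
  have hrowL : ∀ i, ∑ k, L i k = 0 := by
    intro i
    have hr := congrFun hL1 i
    simpa [Matrix.mulVec, dotProduct, hu_def] using hr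
  have hcolL : ∀ j, ∑ k, L k j = 0 := by
    intro j
    calc ∑ k, L k j = ∑ k, L j k := by
          refine Finset.sum_congr rfl fun k _ => ?_
          have := congrFun (congrFun hLt j) k
          simpa [Matrix.transpose_apply] using this
    _ = 0 := hrowL j
  -- column sums of K vanish
  have hcolK : ∀ j, ∑ k, K k j = 0 := by
    intro j
    have hr := congrFun hK1 j
    simpa [Matrix.mulVec, dotProduct, hu_def, Matrix.transpose_apply] using hr
  -- P * L * K = K
  have hPLK : P * L * K = K := by
    have hD : ∀ j, ∃ c : ℝ, (fun i => K i j - (P * L * K) i j) = c • u := by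
      intro j
      apply ker_one_dim hn L hrank hL1
      have hLD : L * (K - P * L * K) = 0 := by
        rw [Matrix.mul_sub, show L * (P * L * K) = L * P * L * K by
          simp only [Matrix.mul_assoc], hP1, sub_self]
      ext i
      have h0 := congrFun (congrFun hLD i) j
      simpa [Matrix.mulVec, dotProduct, Matrix.mul_apply, Matrix.sub_apply, mul_sub,
        Finset.sum_sub_distrib] using h0
    ext i j
    obtain ⟨c, hc⟩ := hD j
    have hcol : ∀ i, K i j - (P * L * K) i j = c := by
      intro i
      have := congrFun hc i
      simpa [hu_def] using this
    -- column sums of P * L * K vanish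
    have hcolPLK : ∑ k, (P * L * K) k j = 0 := by
      have h5 : (P * L) *ᵥ u = 0 := by
        rw [← Matrix.mulVec_mulVec, hL1, Matrix.mulVec_zero]
      have h6 : u ᵥ* (P * L) = 0 := by
        rw [← Matrix.mulVec_transpose, hP4, h5]
      have hv : u ᵥ* (P * L * K) = 0 := by
        rw [← Matrix.vecMul_vecMul, h6, Matrix.zero_vecMul]
      have := congrFun hv j
      simpa [Matrix.vecMul, dotProduct, hu_def] using this
    have hsum : ∑ k, (K k j - (P * L * K) k j) = 0 := by
      rw [Finset.sum_sub_distrib, hcolK j, hcolPLK, sub_zero]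
    have hc0 : c = 0 := by
      have : (n : ℝ) * c = 0 := by
        rw [← hsum]
        simp [hcol, Finset.sum_const, Finset.card_univ, mul_comm]
      rcases mul_eq_zero.mp this with h | h
      · exact absurd h (by positivity)
      · exact h
    have := hcol i
    rw [hc0] at this
    linarith [this]
  -- the averaging matrix
  set E : Matrix (Fin n) (Fin n) ℝ := (n : ℝ)⁻¹ • vecMulVec u u with hE_def
  have hnR : (n : ℝ) ≠ 0 := by positivity
  have hcolKK : ∀ j, ∑ k, (K * Kᵀ) k j = 0 := by
    intro j
    simp only [Matrix.mul_apply, Matrix.transpose_apply]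
    rw [Finset.sum_comm]
    refine Finset.sum_eq_zero fun l _ => ?_
    rw [← Finset.sum_mul, hcolK l, zero_mul]
  have hKKt : (K * Kᵀ)ᵀ = K * Kᵀ := by rw [transpose_mul, transpose_transpose]
  have hvvKK : vecMulVec u u * (K * Kᵀ) = 0 := by
    ext i j
    simp only [Matrix.mul_apply, vecMulVec_apply, hu_def, one_mul, Matrix.zero_apply]
    exact hcolKK j
  have hKKvv : (K * Kᵀ) * vecMulVec u u = 0 := by
    ext i j
    simp only [Matrix.mul_apply, vecMulVec_apply, hu_def, mul_one, Matrix.zero_apply]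
    calc ∑ k, (K * Kᵀ) i k = ∑ k, (K * Kᵀ) k i := by
          refine Finset.sum_congr rfl fun k _ => ?_
          have := congrFun (congrFun hKKt i) k
          simpa [Matrix.transpose_apply] using this.symm
    _ = 0 := hcolKK i
  have hvvL : vecMulVec u u * L = 0 := by
    ext i j
    simp only [Matrix.mul_apply, vecMulVec_apply, hu_def, one_mul, Matrix.zero_apply]
    exact hcolL j
  have hLvv : L * vecMulVec u u = 0 := by
    ext i j
    simp only [Matrix.mul_apply, vecMulVec_apply, hu_def, mul_one, Matrix.zero_apply]
    exact hrowL i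
  have hvvvv : vecMulVec u u * vecMulVec u u = (n : ℝ) • vecMulVec u u := by
    ext i j
    simp [Matrix.mul_apply, vecMulVec_apply, hu_def, Finset.sum_const, Finset.card_univ]
  have hEE : E * E = E := by
    rw [hE_def, Matrix.smul_mul, Matrix.mul_smul, hvvvv, smul_smul, smul_smul]
    congr 1
    field_simp
  have hEKK : E * (K * Kᵀ) = 0 := by rw [hE_def, Matrix.smul_mul, hvvKK, smul_zero]
  have hKKE : (K * Kᵀ) * E = 0 := by rw [hE_def, Matrix.mul_smul, hKKvv, smul_zero]
  have hKKKK : (K * Kᵀ) * (K * Kᵀ) = K * Kᵀ := by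
    rw [Matrix.mul_assoc K Kᵀ (K * Kᵀ), ← Matrix.mul_assoc Kᵀ K Kᵀ, hK, Matrix.one_mul]
  have hEt : Eᵀ = E := by
    ext i j
    simp [hE_def, vecMulVec_apply, hu_def, Matrix.transpose_apply]
  have hKK : K * Kᵀ = 1 - E := by
    have hM : (1 - E - K * Kᵀ) = 0 := by
      apply sq_trace_zero
      · have hMt : (1 - E - K * Kᵀ)ᵀ = 1 - E - K * Kᵀ := by
          rw [transpose_sub, transpose_sub, transpose_one, hEt, hKKt]
        rw [hMt]
        simp only [Matrix.sub_mul, Matrix.mul_sub, Matrix.one_mul, Matrix.mul_one,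
          hEE, hEKK, hKKE, hKKKK, sub_zero, sub_self]
      · rw [Matrix.trace_sub, Matrix.trace_sub, Matrix.trace_one, Fintype.card_fin]
        have htrE : E.trace = 1 := by
          rw [hE_def, Matrix.trace_smul]
          have h7 : (vecMulVec u u).trace = (n : ℝ) := by
            simp [Matrix.trace, Matrix.diag, vecMulVec_apply, hu_def]
          rw [h7, smul_eq_mul, inv_mul_cancel₀ hnR]
        have htrKK : (K * Kᵀ).trace = ((n - 1 : ℕ) : ℝ) := by
          rw [Matrix.trace_mul_comm, hK, Matrix.trace_one]
          simp
        rw [htrE, htrKK, Nat.cast_sub hn]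
        push_cast
        ring
    have := sub_eq_zero.mp hM
    exact this.symm
  have hE_L : E * L = 0 := by rw [hE_def, Matrix.smul_mul, hvvL, smul_zero]
  have hL_E : L * E = 0 := by rw [hE_def, Matrix.mul_smul, hLvv, smul_zero]
  have hAB : (Kᵀ * P * K) * (Kᵀ * L * K) = 1 := by
    have h1E : (1 - E) * (L * K) = L * K := by
      rw [Matrix.sub_mul, Matrix.one_mul, ← Matrix.mul_assoc, hE_L, Matrix.zero_mul, sub_zero]
    calc Kᵀ * P * K * (Kᵀ * L * K) = Kᵀ * (P * ((K * Kᵀ) * (L * K))) := by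
          simp only [Matrix.mul_assoc]
    _ = Kᵀ * (P * (L * K)) := by rw [hKK, h1E]
    _ = Kᵀ * K := by rw [show P * (L * K) = K from by rw [← Matrix.mul_assoc]; exact hPLK]
    _ = 1 := hK
  have hBA : (Kᵀ * L * K) * (Kᵀ * P * K) = 1 := by
    have h1E : L * ((1 - E) * (P * K)) = L * (P * K) := by
      rw [Matrix.sub_mul, Matrix.one_mul, Matrix.mul_sub,
        ← Matrix.mul_assoc L E (P * K), hL_E, Matrix.zero_mul, sub_zero]
    calc Kᵀ * L * K * (Kᵀ * P * K) = Kᵀ * (L * ((K * Kᵀ) * (P * K))) := by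
          simp only [Matrix.mul_assoc]
    _ = Kᵀ * (L * (P * K)) := by rw [hKK, h1E]
    _ = Kᵀ * ((P * L) * K) := by
          rw [show L * (P * K) = (P * L) * K from by
            rw [← Matrix.mul_assoc, hComm]]
    _ = Kᵀ * K := by rw [hPLK]
    _ = 1 := hK
  have hPpsd : P.PosSemidef := by
    have h := hL.conjTranspose_mul_mul_same P
    rwa [conjTranspose_eq_transpose_of_trivial, hPt, hP2] at h
  have hApsd : (Kᵀ * P * K).PosSemidef := by
    have h := hPpsd.conjTranspose_mul_mul_same K
    rwa [conjTranspose_eq_transpose_of_trivial] at h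
  refine ⟨Matrix.PosDef.of_dotProduct_mulVec_pos hApsd.1 fun x hx => ?_, Matrix.inv_eq_left_inv hBA⟩
  rcases (hApsd.dotProduct_mulVec_nonneg x).lt_or_eq with h | h
  · exact h
  · exfalso
    have h0 : (Kᵀ * P * K) *ᵥ x = 0 := (hApsd.dotProduct_mulVec_zero_iff x).mp h.symm
    apply hx
    calc x = ((Kᵀ * L * K) * (Kᵀ * P * K)) *ᵥ x := by rw [hBA, Matrix.one_mulVec]
    _ = (Kᵀ * L * K) *ᵥ ((Kᵀ * P * K) *ᵥ x) := by rw [← Matrix.mulVec_mulVec]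
    _ = 0 := by rw [h0, Matrix.mulVec_zero]
end

section
/- Let A be an invertible n×n real matrix, u, v ∈ ℝ^n, and p a positive integer. Then (A + u v^T)^p = A^p + Σ_{k=1}^{p} Σ over integer tuples (i₀,…,i_k) ≥ 0 with i₀+…+i_k = p−k of A^{i₀} u (∏_{j=1}^{k−1} v^T A^{i_j} u) v^T A^{i_k}, where the empty product (k=1) equals 1. -/
open Matrix Finset

variable {n : ℕ}

lemma mulvmv (M : Matrix (Fin n) (Fin n) ℝ) (u v : Fin n → ℝ) :
    M * vecMulVec u v = vecMulVec (M.mulVec u) v := by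
  ext i j
  simp [mul_apply, vecMulVec_apply, mulVec, dotProduct, Finset.sum_mul, mul_assoc]

lemma vmv_mul_vmv (u v u' v' : Fin n → ℝ) :
    vecMulVec u v * vecMulVec u' v' = (v ⬝ᵥ u') • vecMulVec u v' := by
  ext i j
  simp [mul_apply, vecMulVec_apply, dotProduct, Finset.sum_mul, Finset.mul_sum]
  ring_nf
  apply Finset.sum_congr rfl
  intros; ring

lemma bab (M : Matrix (Fin n) (Fin n) ℝ) (u v : Fin n → ℝ) :
    vecMulVec u v * M * vecMulVec u v = (v ⬝ᵥ M.mulVec u) • vecMulVec u v := by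
  rw [mul_assoc, mulvmv, vmv_mul_vmv]


lemma prod_cons0 (f : ℕ → ℝ) (k : ℕ) (hk : k ≠ 0) (i : Fin (k+1) → ℕ) :
    ∏ j ∈ univ.filter (fun j : Fin (k+2) => j ≠ 0 ∧ j ≠ Fin.last (k+1)),
      f ((Fin.cons 0 i : Fin (k+2) → ℕ) j)
    = f (i 0) * ∏ j ∈ univ.filter (fun j : Fin (k+1) => j ≠ 0 ∧ j ≠ Fin.last k), f (i j) := by
  rw [prod_filter, prod_filter, Fin.prod_univ_succ, Fin.prod_univ_succ, Fin.prod_univ_succ]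
  simp only [Fin.cons_succ, Fin.cons_zero, Fin.succ_ne_zero, ne_eq, not_true_eq_false,
    false_and, if_false, Fin.succ_ne_last_iff, not_false_eq_true, true_and, one_mul]
  have h0 : ¬ (0 : Fin (k+1)) = Fin.last k := by
    rw [Fin.ext_iff]
    simp [Fin.last]
    omega
  rw [if_pos h0]

lemma prod_upd (f : ℕ → ℝ) (k : ℕ) (i : Fin (k+1) → ℕ) (m : ℕ) :
    ∏ j ∈ univ.filter (fun j : Fin (k+1) => j ≠ 0 ∧ j ≠ Fin.last k),
      f (Function.update i 0 m j)
    = ∏ j ∈ univ.filter (fun j : Fin (k+1) => j ≠ 0 ∧ j ≠ Fin.last k), f (i j) := by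
  apply Finset.prod_congr rfl
  intro j hj
  simp only [mem_filter] at hj
  rw [Function.update_of_ne hj.2.1]

open Finset.Nat in
noncomputable def T {n : ℕ} (A : Matrix (Fin n) (Fin n) ℝ) (u v : Fin n → ℝ)
    (k : ℕ) (i : Fin (k+1) → ℕ) : Matrix (Fin n) (Fin n) ℝ :=
  (∏ j ∈ Finset.univ.filter (fun j : Fin (k + 1) => j ≠ 0 ∧ j ≠ Fin.last k),
      (v ⬝ᵥ (A ^ (i j)).mulVec u)) •
    (A ^ (i 0) * vecMulVec u v * A ^ (i (Fin.last k)))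

variable {n : ℕ} (A : Matrix (Fin n) (Fin n) ℝ) (u v : Fin n → ℝ)

lemma last_ne_zero {k : ℕ} (hk : k ≠ 0) : (Fin.last k : Fin (k+1)) ≠ 0 := by
  rw [Ne, Fin.ext_iff]
  simp [Fin.last]
  omega

lemma claimA {k : ℕ} (hk : k ≠ 0) (i : Fin (k+1) → ℕ) :
    A * T A u v k i = T A u v k (Function.update i 0 (i 0 + 1)) := by
  unfold T
  rw [mul_smul_comm, prod_upd (fun m => v ⬝ᵥ (A ^ m).mulVec u),
    Function.update_self, Function.update_of_ne (last_ne_zero hk),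
    ← mul_assoc, ← mul_assoc, ← pow_succ']

lemma claimB {k : ℕ} (hk : k ≠ 0) (i : Fin (k+1) → ℕ) :
    vecMulVec u v * T A u v k i = T A u v (k+1) (Fin.cons 0 i) := by
  unfold T
  rw [prod_cons0 (fun m => v ⬝ᵥ (A ^ m).mulVec u) k hk]
  have hlast : (Fin.cons 0 i : Fin (k+2) → ℕ) (Fin.last (k+1)) = i (Fin.last k) := by
    rw [← Fin.succ_last, Fin.cons_succ]
  rw [hlast, Fin.cons_zero, pow_zero, one_mul, mul_smul_comm]
  have h2 : vecMulVec u v * (A ^ (i 0) * vecMulVec u v * A ^ (i (Fin.last k)))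
      = (v ⬝ᵥ (A ^ (i 0)).mulVec u) • (vecMulVec u v * A ^ (i (Fin.last k))) := by
    rw [← mul_assoc, ← mul_assoc, bab, smul_mul_assoc]
  rw [h2, smul_smul, mul_comm]

lemma claimC (p : ℕ) : vecMulVec u v * A ^ p = T A u v 1 ![0, p] := by
  unfold T
  have : (Finset.univ.filter (fun j : Fin 2 => j ≠ 0 ∧ j ≠ Fin.last 1)) = ∅ := by decide
  rw [this, Finset.prod_empty, one_smul]
  have h1 : (Fin.last 1 : Fin 2) = 1 := rfl
  simp [h1]

lemma sum_update0 {k : ℕ} (x : Fin (k+1) → ℕ) (m : ℕ) :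
    ∑ j, Function.update x 0 m j = m + ∑ j : Fin k, x j.succ := by
  rw [Fin.sum_univ_succ]
  simp [Function.update_of_ne (Fin.succ_ne_zero _)]

lemma sum_succ {k : ℕ} (x : Fin (k+1) → ℕ) :
    ∑ j, x j = x 0 + ∑ j : Fin k, x j.succ := Fin.sum_univ_succ x


lemma lemP2 {p k : ℕ} (hk1 : 1 ≤ k) (hkp : k ≤ p)
    (f : ∀ k : ℕ, (Fin (k+1) → ℕ) → Matrix (Fin n) (Fin n) ℝ)
    (hf : ∀ (i : Fin (k+1) → ℕ), A * f k i = f k (Function.update i 0 (i 0 + 1))) :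
    ∑ i ∈ (Finset.Nat.antidiagonalTuple (k+1) (p+1-k)).filter (fun i => ¬ i 0 = 0),
      f k i
    = ∑ i ∈ Finset.Nat.antidiagonalTuple (k+1) (p-k), A * f k i := by
  symm
  apply Finset.sum_nbij' (fun x => Function.update x 0 (x 0 + 1))
    (fun y => Function.update y 0 (y 0 - 1))
  · intro x hx
    rw [Finset.Nat.mem_antidiagonalTuple, sum_succ] at hx
    simp only [Finset.mem_filter, Finset.Nat.mem_antidiagonalTuple, sum_update0,
      Function.update_self]
    omega
  · intro y hy
    simp only [Finset.mem_filter, Finset.Nat.mem_antidiagonalTuple, sum_succ y] at hy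
    rw [Finset.Nat.mem_antidiagonalTuple, sum_update0]
    omega
  · intro x _
    rw [Function.update_idem, Function.update_self, Nat.add_sub_cancel,
      Function.update_eq_self]
  · intro y hy
    simp only [Finset.mem_filter] at hy
    rw [Function.update_idem, Function.update_self]
    have : y 0 - 1 + 1 = y 0 := by omega
    rw [this, Function.update_eq_self]
  · intro x _
    exact hf x

lemma lemP1inner {k m : ℕ} (B : Matrix (Fin n) (Fin n) ℝ)
    (f : ∀ k : ℕ, (Fin (k+1) → ℕ) → Matrix (Fin n) (Fin n) ℝ)
    (hf : ∀ i : Fin (k+1) → ℕ, B * f k i = f (k+1) (Fin.cons 0 i)) :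
    ∑ i ∈ (Finset.Nat.antidiagonalTuple (k+2) m).filter (fun i => i 0 = 0), f (k+1) i
    = ∑ i ∈ Finset.Nat.antidiagonalTuple (k+1) m, B * f k i := by
  symm
  apply Finset.sum_nbij' (fun x => (Fin.cons 0 x : Fin (k+2) → ℕ)) (fun y => Fin.tail y)
  · intro x hx
    rw [Finset.Nat.mem_antidiagonalTuple] at hx
    simp [Finset.Nat.mem_antidiagonalTuple, Fin.sum_cons, hx]
  · intro y hy
    simp only [Finset.mem_filter, Finset.Nat.mem_antidiagonalTuple, sum_succ y] at hy
    rw [Finset.Nat.mem_antidiagonalTuple]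
    have : ∑ j : Fin (k+1), Fin.tail y j = ∑ j : Fin (k+1), y j.succ := rfl
    omega
  · intro x _
    exact Fin.tail_cons _ _
  · intro y hy
    simp only [Finset.mem_filter] at hy
    have := Fin.cons_self_tail y
    rw [← hy.2] at *
    exact this
  · intro x _
    exact hf x

lemma filter_two (p : ℕ) :
    (Finset.Nat.antidiagonalTuple 2 p).filter (fun i => i 0 = 0) = {![0, p]} := by
  ext x
  simp only [Finset.mem_filter, Finset.Nat.mem_antidiagonalTuple, Finset.mem_singleton,
    Fin.sum_univ_two]
  constructor
  · rintro ⟨hsum, h0⟩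
    funext j
    fin_cases j <;> simp_all
  · rintro rfl
    simp

lemma filter_top {k : ℕ} (M : Type*) [AddCommMonoid M] (f : (Fin (k+1) → ℕ) → M) :
    ∑ i ∈ (Finset.Nat.antidiagonalTuple (k+1) 0).filter (fun i => ¬ i 0 = 0), f i = 0 := by
  rw [Finset.Nat.antidiagonalTuple_zero_right]
  rw [Finset.filter_singleton]
  simp

lemma icc_split (p : ℕ) : Finset.Icc 1 (p+1) = insert 1 (Finset.Icc 2 (p+1)) := by
  ext x
  simp only [Finset.mem_Icc, Finset.mem_insert]
  omega

lemma key {n : ℕ} (A : Matrix (Fin n) (Fin n) ℝ) (u v : Fin n → ℝ) (p : ℕ) (hp : 1 ≤ p) :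
    (A + vecMulVec u v) ^ p
      = A ^ p + ∑ k ∈ Finset.Icc 1 p,
          ∑ i ∈ Finset.Nat.antidiagonalTuple (k + 1) (p - k), T A u v k i := by
  induction p, hp using Nat.le_induction with
  | base =>
    rw [pow_one, pow_one]
    rw [show Finset.Icc 1 1 = {1} from rfl, Finset.sum_singleton, Nat.sub_self,
      Finset.Nat.antidiagonalTuple_zero_right, Finset.sum_singleton]
    have h0 : (0 : Fin 2 → ℕ) = ![0, 0] := by
      funext j; fin_cases j <;> rfl
    rw [h0, ← claimC A u v 0, pow_zero, mul_one]
  | succ p hp ih =>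
    rw [pow_succ', ih, mul_add]
    -- expand (A + B) * A^p and (A + B) * Σ
    rw [add_mul, add_mul, ← pow_succ']
    -- LHS pieces: A^{p+1} + B*A^p + (A*Σ + B*Σ)
    -- Now handle RHS sum
    have hsplit : ∀ k ∈ Finset.Icc 1 (p+1),
        ∑ i ∈ Finset.Nat.antidiagonalTuple (k + 1) (p + 1 - k), T A u v k i
        = (∑ i ∈ (Finset.Nat.antidiagonalTuple (k + 1) (p + 1 - k)).filter
              (fun i => i 0 = 0), T A u v k i)
          + ∑ i ∈ (Finset.Nat.antidiagonalTuple (k + 1) (p + 1 - k)).filter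
              (fun i => ¬ i 0 = 0), T A u v k i := by
      intro k _
      rw [Finset.sum_filter_add_sum_filter_not]
    rw [Finset.sum_congr rfl hsplit, Finset.sum_add_distrib]
    -- P2 part
    have e2 : ∑ k ∈ Finset.Icc 1 (p+1),
        ∑ i ∈ (Finset.Nat.antidiagonalTuple (k + 1) (p + 1 - k)).filter
          (fun i => ¬ i 0 = 0), T A u v k i
        = A * ∑ k ∈ Finset.Icc 1 p,
            ∑ i ∈ Finset.Nat.antidiagonalTuple (k + 1) (p - k), T A u v k i := by
      rw [Finset.sum_Icc_succ_top (by omega : 1 ≤ p + 1)]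
      rw [Nat.sub_self, filter_top, add_zero, Finset.mul_sum]
      apply Finset.sum_congr rfl
      intro k hk
      simp only [Finset.mem_Icc] at hk
      rw [Finset.mul_sum]
      exact lemP2 A hk.1 hk.2 (T A u v) (fun i => claimA A u v (by omega) i)
    -- P1 part
    have e1 : ∑ k ∈ Finset.Icc 1 (p+1),
        ∑ i ∈ (Finset.Nat.antidiagonalTuple (k + 1) (p + 1 - k)).filter
          (fun i => i 0 = 0), T A u v k i
        = vecMulVec u v * A ^ p
          + vecMulVec u v * ∑ k ∈ Finset.Icc 1 p,
              ∑ i ∈ Finset.Nat.antidiagonalTuple (k + 1) (p - k), T A u v k i := by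
      rw [icc_split, Finset.sum_insert (by simp)]
      congr 1
      · rw [show p + 1 - 1 = p from rfl, filter_two, Finset.sum_singleton, claimC]
      · rw [show Finset.Icc 2 (p+1) = (Finset.Icc 1 p).map (addRightEmbedding 1) from
          (Finset.map_add_right_Icc 1 p 1).symm, Finset.sum_map, Finset.mul_sum]
        apply Finset.sum_congr rfl
        intro k hk
        simp only [Finset.mem_Icc] at hk
        have hidx : p + 1 - (k + 1) = p - k := by omega
        rw [Finset.mul_sum]
        have := lemP1inner (m := p - k) (vecMulVec u v) (T A u v)
          (fun i => claimB A u v (by omega : k ≠ 0) i)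
        simp only [addRightEmbedding_apply, hidx]
        exact this
    rw [e1, e2]
    abel

open Matrix

theorem stmt7 {n : ℕ} (A : Matrix (Fin n) (Fin n) ℝ) (u v : Fin n → ℝ)
    (hA : IsUnit A.det) (p : ℕ) (hp : 1 ≤ p) :
    (A + vecMulVec u v) ^ p
      = A ^ p + ∑ k ∈ Finset.Icc 1 p,
          ∑ i ∈ Finset.Nat.antidiagonalTuple (k + 1) (p - k),
            (∏ j ∈ Finset.univ.filter
                (fun j : Fin (k + 1) => j ≠ 0 ∧ j ≠ Fin.last k),
              (v ⬝ᵥ (A ^ (i j)).mulVec u)) •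
            (A ^ (i 0) * vecMulVec u v * A ^ (i (Fin.last k))) := by
  exact key A u v p hp
end

section
/- Let A be an n×n real matrix, u, v ∈ ℝ^n, and p a positive integer. Then tr((A + u v^T)^p) = tr(A^p) + Σ_{k=1}^{p} Σ over nonnegative integer tuples (i₀,…,i_k) with i₀+…+i_k = p−k of (v^T A^{i₀+i_k} u)·∏_{j=1}^{k−1} (v^T A^{i_j} u), with the empty product equal to 1. -/
open Matrix

section Aux
open Finset

variable {n : ℕ} (A : Matrix (Fin n) (Fin n) ℝ) (u v : Fin n → ℝ)

noncomputable def Pm (A B : Matrix (Fin n) (Fin n) ℝ) : (k : ℕ) → (Fin (k+1) → ℕ) → Matrix (Fin n) (Fin n) ℝ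
  | 0, i => A ^ (i 0)
  | (k+1), i => Pm A B k (Fin.init i) * B * A ^ (i (Fin.last (k+1)))

lemma Pm_zero (B : Matrix (Fin n) (Fin n) ℝ) (i : Fin 1 → ℕ) : Pm A B 0 i = A ^ (i 0) := rfl

lemma Pm_succ (B : Matrix (Fin n) (Fin n) ℝ) (k : ℕ) (i : Fin (k+2) → ℕ) :
    Pm A B (k+1) i = Pm A B k (Fin.init i) * B * A ^ (i (Fin.last (k+1))) := rfl

lemma BMB (M : Matrix (Fin n) (Fin n) ℝ) :
    vecMulVec u v * M * vecMulVec u v = (v ⬝ᵥ M.mulVec u) • vecMulVec u v := by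
  ext i j
  simp [vecMulVec_apply, mul_apply, dotProduct, mulVec, Finset.sum_mul, Finset.mul_sum]
  rw [Finset.sum_comm]
  exact Finset.sum_congr rfl fun a _ => Finset.sum_congr rfl fun b _ => by ring

lemma Pm_succ_eq : ∀ (k : ℕ) (i : Fin (k+2) → ℕ),
    Pm A (vecMulVec u v) (k+1) i
      = (∏ j : Fin k, (v ⬝ᵥ (A ^ (i j.succ.castSucc)).mulVec u)) •
        (A ^ (i 0) * vecMulVec u v * A ^ (i (Fin.last (k+1))))
  | 0, i => by
    show Pm A _ 0 (Fin.init i) * _ * _ = _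
    rw [show Pm A (vecMulVec u v) 0 (Fin.init i) = A ^ (i 0) from rfl]
    simp
  | (k+1), i => by
    show Pm A _ (k+1) (Fin.init i) * _ * _ = _
    rw [Pm_succ_eq k (Fin.init i), smul_mul_assoc, smul_mul_assoc, Fin.prod_univ_castSucc,
      mul_smul]
    have h1 : ∀ j : Fin k, Fin.init i j.succ.castSucc = i j.castSucc.succ.castSucc := fun j => rfl
    have h2 : Fin.init i (Fin.last (k+1)) = i (Fin.last k).succ.castSucc := rfl
    have h0 : Fin.init i 0 = i 0 := rfl
    congr 1
    rw [h0, h2, mul_assoc (A ^ i 0) (vecMulVec u v),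
      mul_assoc (A ^ i 0) _ (vecMulVec u v), BMB, mul_smul_comm, smul_mul_assoc]

lemma interior_prod (k : ℕ) (f : Fin (k+2) → ℝ) :
    ∏ j ∈ Finset.univ.filter (fun j : Fin (k+2) => j ≠ 0 ∧ j ≠ Fin.last (k+1)), f j
      = ∏ j : Fin k, f j.succ.castSucc := by
  refine (Finset.prod_bij (fun (j : Fin k) _ => (j.succ.castSucc : Fin (k+2))) ?_ ?_ ?_ ?_).symm
  · intro a _
    simp only [Finset.mem_filter, Finset.mem_univ, true_and]
    constructor
    · intro h
      have := congrArg Fin.val h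
      simp at this
    · intro h
      have h2 := congrArg Fin.val h
      rw [Fin.coe_castSucc, Fin.val_succ, Fin.val_last] at h2
      have := a.isLt
      omega
  · intro a _ b _ h
    have := congrArg Fin.val h
    simp at this
    exact Fin.ext this
  · intro b hb
    simp only [Finset.mem_filter, Finset.mem_univ, true_and] at hb
    have hb1 : (1:ℕ) ≤ b.val := by
      rcases Nat.eq_zero_or_pos b.val with h | h
      · exact absurd (Fin.ext h) hb.1
      · exact h
    have hb2 : b.val ≤ k := by
      have : b.val < k + 2 := b.isLt
      rcases Nat.lt_or_ge b.val (k+1) with h | h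
      · omega
      · exact absurd (Fin.ext (by rw [Fin.val_last]; omega)) hb.2
    refine ⟨⟨b.val - 1, by omega⟩, Finset.mem_univ _, ?_⟩
    apply Fin.ext
    simp
    omega
  · intro a _
    rfl

lemma traceMulB (M : Matrix (Fin n) (Fin n) ℝ) :
    (M * vecMulVec u v).trace = v ⬝ᵥ M.mulVec u := by
  simp [trace, Matrix.diag, mul_apply, vecMulVec_apply, dotProduct, mulVec, Finset.mul_sum]
  exact Finset.sum_congr rfl fun a _ => Finset.sum_congr rfl fun b _ => by ring

lemma trace_Pm (k : ℕ) (i : Fin (k+2) → ℕ) :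
    (Pm A (vecMulVec u v) (k+1) i).trace
      = (v ⬝ᵥ (A ^ (i 0 + i (Fin.last (k+1)))).mulVec u) *
        ∏ j ∈ Finset.univ.filter (fun j : Fin (k+2) => j ≠ 0 ∧ j ≠ Fin.last (k+1)),
          (v ⬝ᵥ (A ^ (i j)).mulVec u) := by
  rw [Pm_succ_eq, trace_smul, interior_prod, smul_eq_mul, mul_comm]
  congr 1
  rw [trace_mul_comm, ← mul_assoc, ← pow_add, add_comm (i (Fin.last (k+1))), traceMulB]

lemma Pm_mul_A (B : Matrix (Fin n) (Fin n) ℝ) :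
    ∀ (k : ℕ) (i : Fin (k+1) → ℕ),
    Pm A B k i * A = Pm A B k (Function.update i (Fin.last k) (i (Fin.last k) + 1))
  | 0, i => by
    show A ^ (i 0) * A = A ^ (Function.update i (Fin.last 0) (i (Fin.last 0) + 1) 0)
    rw [show (Fin.last 0) = 0 from rfl, Function.update_self, pow_succ]
  | (k+1), i => by
    show _ * B * _ * A = Pm A B k _ * B * _
    rw [Fin.init_update_last, mul_assoc, ← pow_succ, Function.update_self]

lemma Pm_mul_B (B : Matrix (Fin n) (Fin n) ℝ) (k : ℕ) (i : Fin (k+1) → ℕ) :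
    Pm A B k i * B = Pm A B (k+1) (Fin.snoc i 0) := by
  rw [Pm_succ, Fin.init_snoc, Fin.snoc_last, pow_zero, mul_one]

lemma sumA (B : Matrix (Fin n) (Fin n) ℝ) (k m : ℕ) :
    ∑ i ∈ Finset.Nat.antidiagonalTuple (k+1) m, Pm A B k i * A
      = ∑ i ∈ (Finset.Nat.antidiagonalTuple (k+1) (m+1)).filter
          (fun i => i (Fin.last k) ≠ 0), Pm A B k i := by
  refine Finset.sum_nbij' (fun i => Function.update i (Fin.last k) (i (Fin.last k) + 1))
    (fun i => Function.update i (Fin.last k) (i (Fin.last k) - 1)) ?_ ?_ ?_ ?_ ?_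
  · intro i hi
    rw [Finset.Nat.mem_antidiagonalTuple] at hi
    simp only [Finset.mem_filter, Finset.Nat.mem_antidiagonalTuple, Function.update_self]
    refine ⟨?_, by omega⟩
    rw [← Finset.add_sum_erase _ _ (Finset.mem_univ (Fin.last k)),
        Function.update_self]
    rw [← Finset.add_sum_erase _ i (Finset.mem_univ (Fin.last k))] at hi
    rw [Finset.sum_congr rfl (fun j hj => Function.update_of_ne (Finset.ne_of_mem_erase hj) _ _)]
    omega
  · intro i hi
    simp only [Finset.mem_filter, Finset.Nat.mem_antidiagonalTuple] at hi
    rw [Finset.Nat.mem_antidiagonalTuple]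
    rw [← Finset.add_sum_erase _ _ (Finset.mem_univ (Fin.last k)), Function.update_self]
    rw [← Finset.add_sum_erase _ i (Finset.mem_univ (Fin.last k))] at hi
    rw [Finset.sum_congr rfl (fun j hj => Function.update_of_ne (Finset.ne_of_mem_erase hj) _ _)]
    obtain ⟨h1, h2⟩ := hi
    omega
  · intro i _
    funext j
    rcases eq_or_ne j (Fin.last k) with rfl | h
    · simp
    · simp [Function.update_of_ne h]
  · intro i hi
    simp only [Finset.mem_filter] at hi
    funext j
    rcases eq_or_ne j (Fin.last k) with rfl | h
    · simp
      omega
    · simp [Function.update_of_ne h]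
  · intro i _
    rw [Pm_mul_A]

lemma sumB (B : Matrix (Fin n) (Fin n) ℝ) (k m : ℕ) :
    ∑ i ∈ Finset.Nat.antidiagonalTuple (k+1) m, Pm A B k i * B
      = ∑ i ∈ (Finset.Nat.antidiagonalTuple (k+2) m).filter
          (fun i => i (Fin.last (k+1)) = 0), Pm A B (k+1) i := by
  refine Finset.sum_nbij' (fun i => Fin.snoc i 0) (fun i => Fin.init i) ?_ ?_ ?_ ?_ ?_
  · intro i hi
    rw [Finset.Nat.mem_antidiagonalTuple] at hi
    simp only [Finset.mem_filter, Finset.Nat.mem_antidiagonalTuple, Fin.snoc_last]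
    refine ⟨?_, trivial⟩
    rw [Fin.sum_univ_castSucc]
    simp [Fin.snoc_castSucc, hi]
  · intro i hi
    simp only [Finset.mem_filter, Finset.Nat.mem_antidiagonalTuple] at hi
    rw [Finset.Nat.mem_antidiagonalTuple]
    obtain ⟨h1, h2⟩ := hi
    rw [Fin.sum_univ_castSucc, h2, add_zero] at h1
    exact h1
  · intro i _
    rw [Fin.init_snoc]
  · intro i hi
    simp only [Finset.mem_filter] at hi
    rw [← hi.2]
    exact Fin.snoc_init_self i
  · intro i _
    exact Pm_mul_B A B k i

lemma expand (B : Matrix (Fin n) (Fin n) ℝ) : ∀ p : ℕ,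
    (A + B) ^ p = ∑ k ∈ Finset.range (p+1),
      ∑ i ∈ Finset.Nat.antidiagonalTuple (k+1) (p-k), Pm A B k i
  | 0 => by
    simp [Finset.Nat.antidiagonalTuple_one]
    show (1 : Matrix (Fin n) (Fin n) ℝ) = A ^ (![0] 0)
    simp
  | (p+1) => by
    rw [pow_succ, expand B p, Finset.sum_mul]
    have step : ∀ k ∈ Finset.range (p+1),
        (∑ i ∈ Finset.Nat.antidiagonalTuple (k+1) (p-k), Pm A B k i) * (A + B)
          = (∑ i ∈ (Finset.Nat.antidiagonalTuple (k+1) (p+1-k)).filter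
              (fun i => i (Fin.last k) ≠ 0), Pm A B k i)
            + ∑ i ∈ (Finset.Nat.antidiagonalTuple (k+2) (p+1-(k+1))).filter
              (fun i => i (Fin.last (k+1)) = 0), Pm A B (k+1) i := by
      intro k hk
      rw [Finset.mem_range] at hk
      rw [mul_add, Finset.sum_mul, Finset.sum_mul, sumA, sumB]
      have : p - k + 1 = p + 1 - k := by omega
      have h2 : p - k = p + 1 - (k+1) := by omega
      rw [this, h2]
    rw [Finset.sum_congr rfl step, Finset.sum_add_distrib]
    -- now reassemble
    have key : ∀ k ∈ Finset.range (p+2),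
        (∑ i ∈ Finset.Nat.antidiagonalTuple (k+1) (p+1-k), Pm A B k i)
          = (∑ i ∈ (Finset.Nat.antidiagonalTuple (k+1) (p+1-k)).filter
              (fun i => i (Fin.last k) = 0), Pm A B k i)
            + ∑ i ∈ (Finset.Nat.antidiagonalTuple (k+1) (p+1-k)).filter
              (fun i => i (Fin.last k) ≠ 0), Pm A B k i := by
      intro k _
      exact (Finset.sum_filter_add_sum_filter_not _ _ _).symm
    rw [Finset.sum_congr rfl key, Finset.sum_add_distrib, add_comm]
    congr 1
    · -- zero-last parts
      conv_rhs => rw [Finset.sum_range_succ']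
      have h0 : (Finset.Nat.antidiagonalTuple (0+1) (p+1-0)).filter
          (fun i => i (Fin.last 0) = 0) = ∅ := by
        rw [Finset.filter_eq_empty_iff]
        intro i hi
        rw [Finset.Nat.mem_antidiagonalTuple] at hi
        rw [Fin.sum_univ_one] at hi
        intro h
        rw [show (Fin.last 0) = (0 : Fin (0+1)) from rfl] at h
        omega
      rw [h0, Finset.sum_empty, add_zero]
    · -- nonzero-last parts
      conv_rhs => rw [Finset.sum_range_succ]
      have h1 : (Finset.Nat.antidiagonalTuple (p+1+1) (p+1-(p+1))).filter
          (fun i => i (Fin.last (p+1)) ≠ 0) = ∅ := by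
        rw [Finset.filter_eq_empty_iff]
        intro i hi
        rw [show p + 1 - (p+1) = 0 from Nat.sub_self _,
          Finset.Nat.antidiagonalTuple_zero_right, Finset.mem_singleton] at hi
        simp [hi]
      rw [h1, Finset.sum_empty, add_zero]

end Aux

theorem stmt8 {n : ℕ} (A : Matrix (Fin n) (Fin n) ℝ) (u v : Fin n → ℝ)
    (p : ℕ) (hp : 1 ≤ p) :
    ((A + vecMulVec u v) ^ p).trace
      = (A ^ p).trace + ∑ k ∈ Finset.Icc 1 p,
          ∑ i ∈ Finset.Nat.antidiagonalTuple (k + 1) (p - k),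
            (v ⬝ᵥ (A ^ (i 0 + i (Fin.last k))).mulVec u) *
              ∏ j ∈ Finset.univ.filter
                  (fun j : Fin (k + 1) => j ≠ 0 ∧ j ≠ Fin.last k),
                (v ⬝ᵥ (A ^ (i j)).mulVec u) := by
  rw [expand A (vecMulVec u v) p, trace_sum, Finset.sum_range_succ']
  have h0 : (∑ i ∈ Finset.Nat.antidiagonalTuple (0+1) (p-0),
      Pm A (vecMulVec u v) 0 i).trace = (A^p).trace := by
    rw [Nat.sub_zero, Finset.Nat.antidiagonalTuple_one, Finset.sum_singleton, Pm_zero]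
    norm_num
  rw [h0, add_comm]
  congr 1
  refine Finset.sum_nbij' (fun k => k+1) (fun k => k-1) ?_ ?_ ?_ ?_ ?_
  · intro k hk
    rw [Finset.mem_range] at hk
    rw [Finset.mem_Icc]
    omega
  · intro k hk
    rw [Finset.mem_Icc] at hk
    rw [Finset.mem_range]
    omega
  · intro k _
    omega
  · intro k hk
    rw [Finset.mem_Icc] at hk
    omega
  · intro k _
    rw [trace_sum]
    exact Finset.sum_congr rfl fun i _ => trace_Pm A u v k i
end
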